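/- arXiv:1805.05798 — 13 statements merged into one kernel-verified Lean document; each statement's English description precedes it below -/
import Mathlib

section
/- For every odd integer k ≥ 3, the equation (λ−2)(1−λ)^{k−1} + 1 = 0 has exactly one real root in the open interval (0,1). -/
/-! Writing `t = 1 - x`, the left-hand side is `1 - t ^ (k - 1) - t ^ k`, which is strictly
increasing in `x` on `[0, 1]` and runs from `-1` to `1`; the intermediate value theorem gives a
root and strict monotonicity makes it unique. -/

open Set

theorem existsUnique_mem_Ioo_of_strictMonoOn_Icc {f : ℝ → ℝ} {a b c : ℝ} (hab : a ≤ b)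
    (hf : ContinuousOn f (Icc a b)) (hmono : StrictMonoOn f (Icc a b))
    (hc : c ∈ Ioo (f a) (f b)) : ∃! x, x ∈ Ioo a b ∧ f x = c := by
  obtain ⟨x, hx, hfx⟩ := intermediate_value_Ioo hab hf hc
  refine ⟨x, ⟨hx, hfx⟩, fun y ⟨hy, hfy⟩ => ?_⟩
  exact hmono.injOn (Ioo_subset_Icc_self hy) (Ioo_subset_Icc_self hx) (hfy.trans hfx.symm)

theorem strictMonoOn_sub_two_mul_one_sub_pow_add_one {n : ℕ} (hn : n ≠ 0) :
    StrictMonoOn (fun x : ℝ => (x - 2) * (1 - x) ^ n + 1) (Iic 1) := by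
  intro a _ b hb hab
  have hb' : 0 ≤ 1 - b := sub_nonneg.mpr hb
  have hba : 1 - b < 1 - a := by linarith
  have h₁ := pow_lt_pow_left₀ hba hb' hn
  have h₂ := pow_lt_pow_left₀ hba hb' n.add_one_ne_zero
  have expand : ∀ x : ℝ, (x - 2) * (1 - x) ^ n + 1 = 1 - (1 - x) ^ n - (1 - x) ^ (n + 1) := by
    intro x; ring
  simp only [expand]
  linarith

theorem stmt_0_general (k : ℕ) (hk3 : 3 ≤ k) :
    ∃! x : ℝ, x ∈ Set.Ioo (0 : ℝ) 1 ∧ (x - 2) * (1 - x) ^ (k - 1) + 1 = 0 := by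
  have hk : k - 1 ≠ 0 := by omega
  refine existsUnique_mem_Ioo_of_strictMonoOn_Icc zero_le_one (by fun_prop)
    ((strictMonoOn_sub_two_mul_one_sub_pow_add_one hk).mono Icc_subset_Iic_self) ?_
  simp [zero_pow hk]

theorem stmt_0 (k : ℕ) (hk : Odd k) (hk3 : 3 ≤ k) :
    ∃! x : ℝ, x ∈ Set.Ioo (0 : ℝ) 1 ∧ (x - 2) * (1 - x) ^ (k - 1) + 1 = 0 :=
  stmt_0_general k hk3
end

section
/- For every odd integer k ≥ 3, the equation (λ−2)^2 (1−λ)^{k−2} − 1 = 0 has exactly one real root in the open interval (0,1). -/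
/-! On `[0, 1]` the map `x ↦ (x - 2)² (1 - x)^m` is strictly decreasing, from `4` at `0` to `0`
at `1` (when `m ≥ 1`), so by the intermediate value theorem it takes the value `1` exactly once. -/

open Set

theorem StrictAntiOn.existsUnique_mem_Ioo_eq {α δ : Type*} [ConditionallyCompleteLinearOrder α]
    [TopologicalSpace α] [OrderTopology α] [DenselyOrdered α] [LinearOrder δ] [TopologicalSpace δ]
    [OrderClosedTopology δ] {f : α → δ} {a b : α} {y : δ} (hab : a ≤ b)
    (hcont : ContinuousOn f (Icc a b)) (hanti : StrictAntiOn f (Icc a b))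
    (hy : y ∈ Ioo (f b) (f a)) : ∃! x, x ∈ Ioo a b ∧ f x = y := by
  obtain ⟨c, hc, hfc⟩ := intermediate_value_Ioo' hab hcont hy
  refine ⟨c, ⟨hc, hfc⟩, fun x ⟨hx, hfx⟩ => ?_⟩
  exact hanti.injOn (Ioo_subset_Icc_self hx) (Ioo_subset_Icc_self hc) (hfx.trans hfc.symm)

theorem strictAntiOn_sub_two_sq_mul_one_sub_pow (m : ℕ) :
    StrictAntiOn (fun x : ℝ => (x - 2) ^ 2 * (1 - x) ^ m) (Icc 0 1) := by
  intro x ⟨hx0, _⟩ y ⟨_, hy1⟩ hxy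
  have hsq : (y - 2) ^ 2 < (x - 2) ^ 2 := by nlinarith
  calc (y - 2) ^ 2 * (1 - y) ^ m ≤ (y - 2) ^ 2 * (1 - x) ^ m := by gcongr
    _ < (x - 2) ^ 2 * (1 - x) ^ m :=
        mul_lt_mul_of_pos_right hsq (pow_pos (by linarith) m)

theorem stmt_1_general (k : ℕ) (hk3 : 3 ≤ k) :
    ∃! x : ℝ, x ∈ Set.Ioo (0 : ℝ) 1 ∧ (x - 2) ^ 2 * (1 - x) ^ (k - 2) - 1 = 0 := by
  have hk : k - 2 ≠ 0 := by omega
  have hone : (1 : ℝ) ∈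
      Ioo ((1 - 2) ^ 2 * (1 - 1) ^ (k - 2)) ((0 - 2) ^ 2 * (1 - 0) ^ (k - 2)) := by
    simp [zero_pow hk]
  simpa only [sub_eq_zero] using
    (strictAntiOn_sub_two_sq_mul_one_sub_pow (k - 2)).existsUnique_mem_Ioo_eq zero_le_one
      (by fun_prop) hone

theorem stmt_1 (k : ℕ) (hk : Odd k) (hk3 : 3 ≤ k) :
    ∃! x : ℝ, x ∈ Set.Ioo (0 : ℝ) 1 ∧ (x - 2) ^ 2 * (1 - x) ^ (k - 2) - 1 = 0 :=
  stmt_1_general k hk3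
end

section
/- For every odd integer k ≥ 3, the equation (λ−2)^2 (1−λ)^{k−1} + 2λ − 3 = 0 has exactly one real root in the interval (0,1) and exactly one real root in the interval (1, 2k/(k+1)). -/
/-!
Since `(x - 2)^2 + 2x - 3 = (x - 1)^2`, for `x ≠ 2` the equation is equivalent to
`((1 - x) / (2 - x))^2 + (1 - x)^(k-1) = 1`. Both `1 - x` and `(1 - x) / (2 - x)` decrease
strictly in `x < 2`, are positive on `(0, 1)` and negative on `(1, 2)`, and they appear to even
powers; so the left-hand side is strictly monotone on each interval, and there is at most one
root in each. Roots exist by the intermediate value theorem: the polynomial is `1` at `0`, `-1`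
at `1`, and positive at `2k/(k+1) ∈ [3/2, 2)`, where `2x - 3 ≥ 0`.
-/

open Set

lemma Even.strictAntiOn_pow {R : Type*} [Ring R] [LinearOrder R] [IsStrictOrderedRing R]
    {n : ℕ} (hn : Even n) (hn0 : n ≠ 0) : StrictAntiOn (fun a : R => a ^ n) (Iic 0) :=
  fun a _ b hb hab => by
    simpa only [hn.neg_pow] using pow_lt_pow_left₀ (neg_lt_neg hab) (neg_nonneg.2 hb) hn0

lemma strictAntiOn_one_sub_div_two_sub :
    StrictAntiOn (fun x : ℝ => (1 - x) / (2 - x)) (Iio 2) := by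
  intro a ha b hb hab
  rw [mem_Iio] at ha hb
  rw [div_lt_div_iff₀ (by linarith) (by linarith)]
  nlinarith

lemma strictAnti_one_sub : StrictAnti (fun x : ℝ => 1 - x) :=
  fun _ _ h => sub_lt_sub_left h 1

noncomputable def lambdaPoly (n : ℕ) (x : ℝ) : ℝ := (x - 2) ^ 2 * (1 - x) ^ n + 2 * x - 3

noncomputable def lambdaRatio (n : ℕ) (x : ℝ) : ℝ := ((1 - x) / (2 - x)) ^ 2 + (1 - x) ^ n

variable {n : ℕ} {x : ℝ}

lemma lambdaPoly_eq_mul (hx : x ≠ 2) : lambdaPoly n x = (2 - x) ^ 2 * (lambdaRatio n x - 1) := by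
  have : 2 - x ≠ 0 := sub_ne_zero.2 hx.symm
  unfold lambdaPoly lambdaRatio
  field_simp
  ring

lemma lambdaPoly_eq_zero_iff (hx : x ≠ 2) : lambdaPoly n x = 0 ↔ lambdaRatio n x = 1 := by
  rw [lambdaPoly_eq_mul hx, mul_eq_zero, sub_eq_zero, or_iff_right]
  exact pow_ne_zero 2 (sub_ne_zero.2 hx.symm)

lemma lambdaRatio_strictAntiOn (hn0 : n ≠ 0) : StrictAntiOn (lambdaRatio n) (Ioo 0 1) := by
  have hratio : StrictAntiOn (fun x : ℝ => ((1 - x) / (2 - x)) ^ 2) (Ioo 0 1) :=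
    (pow_left_strictMonoOn₀ two_ne_zero).comp_strictAntiOn
      (strictAntiOn_one_sub_div_two_sub.mono fun x hx => hx.2.trans one_lt_two)
      (fun x hx => div_nonneg (sub_nonneg.2 hx.2.le) (sub_nonneg.2 (hx.2.trans one_lt_two).le))
  have hpow : StrictAntiOn (fun x : ℝ => (1 - x) ^ n) (Ioo 0 1) :=
    (pow_left_strictMonoOn₀ hn0).comp_strictAntiOn (strictAnti_one_sub.strictAntiOn _)
      (fun x hx => sub_nonneg.2 hx.2.le)
  exact hratio.add hpow

lemma lambdaRatio_strictMonoOn (hn : Even n) (hn0 : n ≠ 0) :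
    StrictMonoOn (lambdaRatio n) (Ioo 1 2) := by
  have hratio : StrictMonoOn (fun x : ℝ => ((1 - x) / (2 - x)) ^ 2) (Ioo 1 2) :=
    (even_two.strictAntiOn_pow two_ne_zero).comp
      (strictAntiOn_one_sub_div_two_sub.mono fun x hx => hx.2)
      (fun x hx => div_nonpos_of_nonpos_of_nonneg (sub_nonpos.2 hx.1.le) (sub_nonneg.2 hx.2.le))
  have hpow : StrictMonoOn (fun x : ℝ => (1 - x) ^ n) (Ioo 1 2) :=
    (hn.strictAntiOn_pow hn0).comp (strictAnti_one_sub.strictAntiOn _)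
      (fun x hx => sub_nonpos.2 hx.1.le)
  exact hratio.add hpow

lemma existsUnique_lambdaPoly_root {s : Set ℝ} (hs : s ⊆ Iio 2) (hinj : InjOn (lambdaRatio n) s)
    (hex : ∃ x ∈ s, lambdaPoly n x = 0) : ∃! x, x ∈ s ∧ lambdaPoly n x = 0 := by
  obtain ⟨x, hx, hx0⟩ := hex
  refine ⟨x, ⟨hx, hx0⟩, fun y ⟨hy, hy0⟩ => hinj hy hx ?_⟩
  rw [(lambdaPoly_eq_zero_iff (hs hy).ne).1 hy0, (lambdaPoly_eq_zero_iff (hs hx).ne).1 hx0]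

lemma continuous_lambdaPoly : Continuous (lambdaPoly n) := by
  unfold lambdaPoly
  fun_prop

lemma lambdaPoly_zero : lambdaPoly n 0 = 1 := by
  norm_num [lambdaPoly]

lemma lambdaPoly_one (hn0 : n ≠ 0) : lambdaPoly n 1 = -1 := by
  norm_num [lambdaPoly, zero_pow hn0]

lemma lambdaPoly_pos (hn : Even n) (hx₁ : 3 / 2 ≤ x) (hx₂ : x < 2) : 0 < lambdaPoly n x := by
  have : 0 < (x - 2) ^ 2 * (1 - x) ^ n :=
    mul_pos (even_two.pow_pos (by linarith : x - 2 < 0).ne)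
      (hn.pow_pos (by linarith : 1 - x < 0).ne)
  unfold lambdaPoly
  linarith

lemma exists_lambdaPoly_root_Ioo_zero_one (hn0 : n ≠ 0) : ∃ x ∈ Ioo 0 1, lambdaPoly n x = 0 :=
  intermediate_value_Ioo' zero_le_one continuous_lambdaPoly.continuousOn
    ⟨by rw [lambdaPoly_one hn0]; norm_num, by rw [lambdaPoly_zero]; norm_num⟩

lemma exists_lambdaPoly_root_Ioo_one (hn0 : n ≠ 0) {c : ℝ} (hc : 1 ≤ c)
    (hpos : 0 < lambdaPoly n c) : ∃ x ∈ Ioo 1 c, lambdaPoly n x = 0 :=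
  intermediate_value_Ioo hc continuous_lambdaPoly.continuousOn
    ⟨by rw [lambdaPoly_one hn0]; norm_num, hpos⟩

theorem stmt_2 (k : ℕ) (hk : Odd k) (hk3 : 3 ≤ k) :
    (∃! x : ℝ, x ∈ Set.Ioo (0 : ℝ) 1 ∧ (x - 2) ^ 2 * (1 - x) ^ (k - 1) + 2 * x - 3 = 0) ∧
    (∃! x : ℝ, x ∈ Set.Ioo (1 : ℝ) (2 * k / (k + 1)) ∧
      (x - 2) ^ 2 * (1 - x) ^ (k - 1) + 2 * x - 3 = 0) := by
  have hn : Even (k - 1) := Nat.Odd.sub_odd hk odd_one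
  have hn0 : k - 1 ≠ 0 := by omega
  have hk' : (3 : ℝ) ≤ k := by exact_mod_cast hk3
  have hc₁ : 3 / 2 ≤ 2 * (k : ℝ) / (k + 1) := by rw [le_div_iff₀ (by positivity)]; linarith
  have hc₂ : 2 * (k : ℝ) / (k + 1) < 2 := by rw [div_lt_iff₀ (by positivity)]; linarith
  exact ⟨existsUnique_lambdaPoly_root (fun x hx => hx.2.trans one_lt_two)
      (lambdaRatio_strictAntiOn hn0).injOn (exists_lambdaPoly_root_Ioo_zero_one hn0),
    existsUnique_lambdaPoly_root (fun x hx => hx.2.trans hc₂)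
      ((lambdaRatio_strictMonoOn hn hn0).mono (Ioo_subset_Ioo_right hc₂.le)).injOn
      (exists_lambdaPoly_root_Ioo_one hn0 (by linarith) (lambdaPoly_pos hn hc₁ hc₂))⟩
end

section
/- For every even integer k ≥ 4, the equation (λ−2)^2 (λ−1)^{k−2} − 1 = 0 has exactly one real root in (0,1) and exactly one real root in (2,3), and no real root in [1,2]. -/
/-!
Write `g(λ) = (λ - 2)² (λ - 1)ᵐ` with `m = k - 2`, an even positive integer. On `[1, 2]` both
factors lie in `[0, 1]` and `g(λ) ≤ (2 - λ)(λ - 1) ≤ 1/4`, so `g ≠ 1` there. Since `m` is even,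
`g(λ) = (2 - λ)² (1 - λ)ᵐ` is a product of two decreasing nonnegative factors on `λ ≤ 1`, and
on `λ ≥ 2` it is a product of two increasing nonnegative factors. With `g 0 = 4`, `g 1 = 0`,
`g 2 = 0` and `g 3 = 2ᵐ`, the intermediate value theorem gives a root of `g = 1` in each of
`(0, 1)` and `(2, 3)`, unique by strict monotonicity.
-/

open Set

theorem Set.InjOn.existsUnique_eq_of_mem_image {α β : Type*} {f : α → β} {s : Set α} {c : β}
    (hf : InjOn f s) (hc : c ∈ f '' s) : ∃! x, x ∈ s ∧ f x = c := by
  obtain ⟨x, hx, rfl⟩ := hc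
  exact ⟨x, ⟨hx, rfl⟩, fun y hy => hf hy.1 hx hy.2⟩

theorem strictAntiOn_sub_two_sq_mul_sub_one_pow {m : ℕ} (hm : Even m) :
    StrictAntiOn (fun x : ℝ => (x - 2) ^ 2 * (x - 1) ^ m) (Iic 1) := by
  intro a ha b hb hab
  have hb1 : b ≤ 1 := hb
  have hflip : ∀ x : ℝ, (x - 2) ^ 2 * (x - 1) ^ m = (2 - x) ^ 2 * (1 - x) ^ m := fun x => by
    rw [show x - 1 = -(1 - x) by ring, hm.neg_pow, show x - 2 = -(2 - x) by ring, neg_sq]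
  simp only [hflip]
  exact mul_lt_mul_of_lt_of_le_of_nonneg_of_pos
    (pow_lt_pow_left₀ (by linarith) (by linarith) two_ne_zero)
    (pow_le_pow_left₀ (by linarith) (by linarith) m)
    (sq_nonneg _) (pow_pos (by linarith) m)

theorem strictMonoOn_sub_two_sq_mul_sub_one_pow (m : ℕ) :
    StrictMonoOn (fun x : ℝ => (x - 2) ^ 2 * (x - 1) ^ m) (Ici 2) := by
  intro a ha b hb hab
  have ha2 : (2 : ℝ) ≤ a := ha
  exact mul_lt_mul_of_lt_of_le_of_nonneg_of_pos
    (pow_lt_pow_left₀ (by linarith) (by linarith) two_ne_zero)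
    (pow_le_pow_left₀ (by linarith) (by linarith) m)
    (sq_nonneg _) (pow_pos (by linarith) m)

theorem sub_two_sq_mul_sub_one_pow_lt_one {m : ℕ} (hm : m ≠ 0) {x : ℝ} (hx : x ∈ Icc 1 2) :
    (x - 2) ^ 2 * (x - 1) ^ m < 1 := by
  obtain ⟨hx1, hx2⟩ := hx
  have hpow : (x - 1) ^ m ≤ x - 1 := pow_le_of_le_one (by linarith) (by linarith) hm
  have hsq : (x - 2) ^ 2 ≤ 2 - x := by nlinarith
  calc (x - 2) ^ 2 * (x - 1) ^ m ≤ (2 - x) * (x - 1) :=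
        mul_le_mul hsq hpow (pow_nonneg (by linarith) m) (by linarith)
    _ < 1 := by nlinarith [sq_nonneg (x - 3 / 2)]

theorem existsUnique_sub_two_sq_mul_sub_one_pow_eq_one_Ioo_zero_one {m : ℕ} (hm : Even m)
    (hm0 : m ≠ 0) : ∃! x : ℝ, x ∈ Ioo 0 1 ∧ (x - 2) ^ 2 * (x - 1) ^ m = 1 := by
  refine ((strictAntiOn_sub_two_sq_mul_sub_one_pow hm).injOn.mono
    (Ioo_subset_Icc_self.trans Icc_subset_Iic_self)).existsUnique_eq_of_mem_image
    (intermediate_value_Ioo' zero_le_one (by fun_prop) ⟨?_, ?_⟩)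
  · simp [zero_pow hm0]
  · norm_num [hm.neg_pow]

theorem existsUnique_sub_two_sq_mul_sub_one_pow_eq_one_Ioo_two_three {m : ℕ} (hm0 : m ≠ 0) :
    ∃! x : ℝ, x ∈ Ioo 2 3 ∧ (x - 2) ^ 2 * (x - 1) ^ m = 1 := by
  refine ((strictMonoOn_sub_two_sq_mul_sub_one_pow m).injOn.mono
    (Ioo_subset_Icc_self.trans Icc_subset_Ici_self)).existsUnique_eq_of_mem_image
    (intermediate_value_Ioo (by norm_num) (by fun_prop) ⟨by norm_num, ?_⟩)
  norm_num [one_lt_pow₀ (one_lt_two : (1 : ℝ) < 2) hm0]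

theorem stmt_6 (k : ℕ) (hk : Even k) (hk4 : 4 ≤ k) :
    (∃! x : ℝ, x ∈ Set.Ioo (0 : ℝ) 1 ∧ (x - 2) ^ 2 * (x - 1) ^ (k - 2) - 1 = 0) ∧
    (∃! x : ℝ, x ∈ Set.Ioo (2 : ℝ) 3 ∧ (x - 2) ^ 2 * (x - 1) ^ (k - 2) - 1 = 0) ∧
    (∀ x ∈ Set.Icc (1 : ℝ) 2, (x - 2) ^ 2 * (x - 1) ^ (k - 2) - 1 ≠ 0) := by
  have hm : Even (k - 2) := (Nat.even_sub (by omega)).2 (by simp [hk])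
  have hm0 : k - 2 ≠ 0 := by omega
  simp only [sub_eq_zero, ne_eq]
  exact ⟨existsUnique_sub_two_sq_mul_sub_one_pow_eq_one_Ioo_zero_one hm hm0,
    existsUnique_sub_two_sq_mul_sub_one_pow_eq_one_Ioo_two_three hm0,
    fun x hx => (sub_two_sq_mul_sub_one_pow_lt_one hm0 hx).ne⟩
end

section
/- For every even integer k ≥ 4, the equation (λ−2)^2 (1−λ)^{k−1} + 1 = 0 has exactly one real root in the interval (2,3). -/
/-! Substituting `1 - x = -(x - 1)` and using that `k - 1` is odd, the equation becomes
`(x - 2)² (x - 1)^(k - 1) = 1`. The left side is continuous and strictly increasing on `[2, 3]`,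
running from `0` to `2^(k - 1) > 1`, so it takes the value `1` exactly once in `(2, 3)`. -/

open Set

theorem existsUnique_mem_Ioo_of_strictMonoOn {f : ℝ → ℝ} {a b y : ℝ} (hab : a ≤ b)
    (hf : ContinuousOn f (Icc a b)) (hmono : StrictMonoOn f (Icc a b)) (hy : y ∈ Ioo (f a) (f b)) :
    ∃! x, x ∈ Ioo a b ∧ f x = y := by
  obtain ⟨x, hx, hfx⟩ := intermediate_value_Ioo hab hf hy
  refine ⟨x, ⟨hx, hfx⟩, fun z ⟨hz, hfz⟩ => ?_⟩
  exact hmono.injOn (Ioo_subset_Icc_self hz) (Ioo_subset_Icc_self hx) (hfz.trans hfx.symm)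

theorem strictMonoOn_sub_pow_mul_sub_pow {a b : ℝ} (hba : b ≤ a) {m : ℕ} (hm : m ≠ 0) (n : ℕ) :
    StrictMonoOn (fun x : ℝ => (x - a) ^ m * (x - b) ^ n) (Ici a) := by
  intro x hx y _ hxy
  have hxa : 0 ≤ x - a := sub_nonneg.mpr hx
  have hxb : 0 ≤ x - b := by linarith [mem_Ici.mp hx]
  have hyb : 0 < y - b := by linarith [mem_Ici.mp hx]
  exact mul_lt_mul_of_lt_of_le_of_nonneg_of_pos (pow_lt_pow_left₀ (by linarith) hxa hm)
    (pow_le_pow_left₀ hxb (by linarith) n) (by positivity) (by positivity)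

theorem mul_one_sub_pow_add_one_eq_zero_iff {n : ℕ} (hn : Odd n) (c x : ℝ) :
    c * (1 - x) ^ n + 1 = 0 ↔ c * (x - 1) ^ n = 1 := by
  rw [← neg_sub x 1, hn.neg_pow]
  constructor <;> intro h <;> linarith

theorem stmt_7 (k : ℕ) (hk : Even k) (hk4 : 4 ≤ k) :
    ∃! x : ℝ, x ∈ Set.Ioo (2 : ℝ) 3 ∧ (x - 2) ^ 2 * (1 - x) ^ (k - 1) + 1 = 0 := by
  have hodd : Odd (k - 1) := Nat.Even.sub_odd (by omega) hk odd_one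
  simp only [mul_one_sub_pow_add_one_eq_zero_iff hodd]
  set g : ℝ → ℝ := fun x => (x - 2) ^ 2 * (x - 1) ^ (k - 1)
  have hmono : StrictMonoOn g (Icc 2 3) :=
    (strictMonoOn_sub_pow_mul_sub_pow (by norm_num) two_ne_zero _).mono Icc_subset_Ici_self
  have hvalues : (1 : ℝ) ∈ Ioo (g 2) (g 3) := by
    refine ⟨by norm_num [g], ?_⟩
    calc (1 : ℝ) < 2 ^ (k - 1) := one_lt_pow₀ one_lt_two (by omega)
      _ = g 3 := by norm_num [g]
  exact existsUnique_mem_Ioo_of_strictMonoOn (by norm_num) (by fun_prop) hmono hvalues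
end

section
/- For every even integer k ≥ 4, the equation (λ−2)^2 (λ−1)^{k−1} − 2λ + 3 = 0 has at least one real root in each of the intervals (0,1), (1, 2k/(k+1)), and (2,3). -/
/-!
With `P x = (x - 2)² (x - 1)^(k-1) - 2x + 3` and `k - 1` odd, `P 0 = -1`, `P 1 = 1`, `P 2 = -1`
and `P 3 = 2^(k-1) - 3 > 0`, so the intermediate value theorem gives roots in `(0,1)` and `(2,3)`.
On `[1,2]` the factor `(x - 1)^(k-1)` lies in `[0,1]`, hence `P x ≤ x² - 6x + 7`; at
`b = 2k/(k+1)` this bound equals `(7 + 2k - k²)/(k+1)²`, negative for `k ≥ 4`, which gives the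
sign change on `(1, b)`.
-/

open Set

/-- The left-hand side of the equation, with exponent `n = k - 1`. -/
def P (n : ℕ) (x : ℝ) : ℝ := (x - 2) ^ 2 * (x - 1) ^ n - 2 * x + 3

namespace P

variable {n : ℕ}

theorem continuous (n : ℕ) : Continuous (P n) := by
  unfold P; fun_prop

theorem apply_zero (hn : Odd n) : P n 0 = -1 := by
  norm_num [P, hn.neg_one_pow]

theorem apply_one (hn : n ≠ 0) : P n 1 = 1 := by
  norm_num [P, hn]

theorem apply_two (n : ℕ) : P n 2 = -1 := by
  norm_num [P]

theorem apply_three_pos (hn : 2 ≤ n) : 0 < P n 3 := by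
  have h : (2 : ℝ) ^ 2 ≤ 2 ^ n := pow_le_pow_right₀ (by norm_num) hn
  norm_num [P]; linarith

theorem le_of_mem_Icc {x : ℝ} (hx : x ∈ Icc 1 2) : P n x ≤ x ^ 2 - 6 * x + 7 := by
  have hpow : (x - 1) ^ n ≤ 1 := pow_le_one₀ (by linarith [hx.1]) (by linarith [hx.2])
  have := mul_le_of_le_one_right (sq_nonneg (x - 2)) hpow
  unfold P; linarith

end P

theorem sq_sub_six_mul_add_seven_neg {k : ℝ} (hk : 4 ≤ k) :
    (2 * k / (k + 1)) ^ 2 - 6 * (2 * k / (k + 1)) + 7 < 0 := by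
  have hk1 : 0 < k + 1 := by linarith
  have h : (2 * k / (k + 1)) ^ 2 - 6 * (2 * k / (k + 1)) + 7
      = (7 + 2 * k - k ^ 2) / (k + 1) ^ 2 := by
    field_simp; ring
  rw [h]
  exact div_neg_of_neg_of_pos (by nlinarith) (by positivity)

theorem two_mul_div_add_one_mem_Icc {k : ℝ} (hk : 1 ≤ k) : 2 * k / (k + 1) ∈ Icc 1 2 := by
  have hk1 : 0 < k + 1 := by linarith
  rw [mem_Icc, le_div_iff₀ hk1, div_le_iff₀ hk1]
  constructor <;> linarith

theorem stmt_8 (k : ℕ) (hk : Even k) (hk4 : 4 ≤ k) :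
    (∃ x ∈ Set.Ioo (0 : ℝ) 1, (x - 2) ^ 2 * (x - 1) ^ (k - 1) - 2 * x + 3 = 0) ∧
    (∃ x ∈ Set.Ioo (1 : ℝ) (2 * k / (k + 1)),
      (x - 2) ^ 2 * (x - 1) ^ (k - 1) - 2 * x + 3 = 0) ∧
    (∃ x ∈ Set.Ioo (2 : ℝ) 3, (x - 2) ^ 2 * (x - 1) ^ (k - 1) - 2 * x + 3 = 0) := by
  have hodd : Odd (k - 1) := Nat.Even.sub_odd (by omega) hk odd_one
  have hK : (4 : ℝ) ≤ k := by exact_mod_cast hk4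
  have hb := two_mul_div_add_one_mem_Icc (by linarith : (1 : ℝ) ≤ k)
  have hPb : P (k - 1) (2 * k / (k + 1)) < 0 :=
    (P.le_of_mem_Icc hb).trans_lt (sq_sub_six_mul_add_seven_neg hK)
  have hP1 : 0 < P (k - 1) 1 := by rw [P.apply_one (by omega)]; exact one_pos
  have hcont {a b : ℝ} : ContinuousOn (P (k - 1)) (Icc a b) := (P.continuous _).continuousOn
  refine ⟨?_, ?_, ?_⟩
  · exact intermediate_value_Ioo zero_le_one hcont ⟨by rw [P.apply_zero hodd]; norm_num, hP1⟩
  · exact intermediate_value_Ioo' hb.1 hcont ⟨hPb, hP1⟩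
  · exact intermediate_value_Ioo (by norm_num) hcont
      ⟨by rw [P.apply_two]; norm_num, P.apply_three_pos (by omega)⟩
end

section
/- For every even integer k ≥ 4, the equation ((λ−2)(λ−1)^{k−1} − 1)^2 − (λ−1)^k = 0 has no real root λ with λ ≥ 3 and no real root in the open interval (1,2). -/
/-! Put `t = λ - 1` and `n = k - 1`, so the equation reads `((t - 1) tⁿ - 1)² = tⁿ⁺¹`.
For `0 < t < 1` the left side exceeds `1` while the right side is below `1`. For `t ≥ 2` write
`u = tⁿ⁺¹ ≥ 8`: then `(t - 1) tⁿ - 1 ≥ u / 2 - 1`, and `(u / 2 - 1)² > u` once `u ≥ 8`. -/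

open Set

lemma lt_sq_half_sub_one {u : ℝ} (hu : 8 ≤ u) : u < (u / 2 - 1) ^ 2 := by
  nlinarith

lemma pow_succ_lt_sq_of_two_le {t : ℝ} (ht : 2 ≤ t) {n : ℕ} (hn : 2 ≤ n) :
    t ^ (n + 1) < ((t - 1) * t ^ n - 1) ^ 2 := by
  have hu : 8 ≤ t ^ (n + 1) :=
    calc (8 : ℝ) = 2 ^ 3 := by norm_num
      _ ≤ 2 ^ (n + 1) := pow_le_pow_right₀ (by norm_num) (by omega)
      _ ≤ t ^ (n + 1) := pow_le_pow_left₀ (by norm_num) ht _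
  have hbase : t ^ (n + 1) / 2 - 1 ≤ (t - 1) * t ^ n - 1 := by
    have : 0 ≤ t ^ n * (t / 2 - 1) := mul_nonneg (by positivity) (by linarith)
    rw [pow_succ]
    linarith
  calc t ^ (n + 1) < (t ^ (n + 1) / 2 - 1) ^ 2 := lt_sq_half_sub_one hu
    _ ≤ ((t - 1) * t ^ n - 1) ^ 2 := pow_le_pow_left₀ (by linarith) hbase _

lemma pow_succ_lt_sq_of_mem_Ioo {t : ℝ} (ht : t ∈ Ioo 0 1) (n : ℕ) :
    t ^ (n + 1) < ((t - 1) * t ^ n - 1) ^ 2 := by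
  obtain ⟨ht0, ht1⟩ := ht
  have hneg : (t - 1) * t ^ n - 1 < -1 := by
    nlinarith [mul_neg_of_neg_of_pos (sub_neg.2 ht1) (pow_pos ht0 n)]
  calc t ^ (n + 1) < 1 := pow_lt_one₀ ht0.le ht1 (by omega)
    _ < ((t - 1) * t ^ n - 1) ^ 2 := by nlinarith

theorem stmt_9_general (k : ℕ) (hk4 : 4 ≤ k) :
    (∀ x : ℝ, 3 ≤ x → ((x - 2) * (x - 1) ^ (k - 1) - 1) ^ 2 - (x - 1) ^ k ≠ 0) ∧
    (∀ x ∈ Set.Ioo (1 : ℝ) 2, ((x - 2) * (x - 1) ^ (k - 1) - 1) ^ 2 - (x - 1) ^ k ≠ 0) := by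
  obtain ⟨n, rfl⟩ : ∃ n, k = n + 1 := ⟨k - 1, by omega⟩
  have hsub (x : ℝ) : x - 2 = x - 1 - 1 := by ring
  simp only [Nat.add_sub_cancel, hsub]
  constructor
  · intro x hx
    exact (sub_pos.2 (pow_succ_lt_sq_of_two_le (by linarith) (by omega))).ne'
  · rintro x ⟨hx1, hx2⟩
    exact (sub_pos.2 (pow_succ_lt_sq_of_mem_Ioo ⟨by linarith, by linarith⟩ n)).ne'

theorem stmt_9 (k : ℕ) (hk : Even k) (hk4 : 4 ≤ k) :
    (∀ x : ℝ, 3 ≤ x → ((x - 2) * (x - 1) ^ (k - 1) - 1) ^ 2 - (x - 1) ^ k ≠ 0) ∧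
    (∀ x ∈ Set.Ioo (1 : ℝ) 2, ((x - 2) * (x - 1) ^ (k - 1) - 1) ^ 2 - (x - 1) ^ k ≠ 0) :=
  stmt_9_general k hk4
end

section
/- For every even integer k ≥ 4, the function f(λ) = ((λ−2)(λ−1)^{k−1} − 1)^2 − (λ−1)^k satisfies f(3) > 0, and the equation f(λ) = 0 has exactly one real root in the interval (2,3). -/
/-!
Write `k = 2(n + 1)`, `t = λ - 1` and `A = (t - 1) t^(2n+1) - 1`, so that
`f = A² - t^(2n+2) = (A - t^(n+1)) (A + t^(n+1))`. On `λ > 2` the second factor is positive,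
since `A > -1` and `t^(n+1) > 1`. The first factor is `t^(n+1)` times
`(t - 1) t^n - t^(-(n+1)) - 1`, which is continuous and strictly increasing on `λ ≥ 2`,
equals `-2` at `λ = 2` and is positive at `λ = 3` once `n ≥ 1`; the intermediate value theorem
gives exactly one root in `(2, 3)`.
-/

open Set

theorem StrictMonoOn.existsUnique_zero_Ioo {α β : Type*} [ConditionallyCompleteLinearOrder α]
    [DenselyOrdered α] [TopologicalSpace α] [OrderTopology α] [LinearOrder β] [TopologicalSpace β]
    [OrderClosedTopology β] [Zero β] {φ : α → β} {a b : α} (hab : a ≤ b)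
    (hφ : StrictMonoOn φ (Icc a b)) (hcont : ContinuousOn φ (Icc a b)) (ha : φ a < 0)
    (hb : 0 < φ b) : ∃! x, x ∈ Ioo a b ∧ φ x = 0 := by
  obtain ⟨c, hc, hφc⟩ := intermediate_value_Ioo hab hcont ⟨ha, hb⟩
  refine ⟨c, ⟨hc, hφc⟩, fun y ⟨hy, hφy⟩ => ?_⟩
  exact hφ.injOn (Ioo_subset_Icc_self hy) (Ioo_subset_Icc_self hc) (hφy.trans hφc.symm)

namespace RootInUnitInterval

noncomputable section

def f (k : ℕ) (x : ℝ) : ℝ := ((x - 2) * (x - 1) ^ (k - 1) - 1) ^ 2 - (x - 1) ^ k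

def rescaledFactor (n : ℕ) (x : ℝ) : ℝ := (x - 2) * (x - 1) ^ n - ((x - 1) ^ (n + 1))⁻¹ - 1

theorem f_eq_mul (n : ℕ) {x : ℝ} (hx : x ≠ 1) :
    f (2 * n + 2) x = (x - 1) ^ (n + 1) * rescaledFactor n x *
      ((x - 2) * (x - 1) ^ (2 * n + 1) - 1 + (x - 1) ^ (n + 1)) := by
  have hx1 : x - 1 ≠ 0 := sub_ne_zero.mpr hx
  rw [f, rescaledFactor, show 2 * n + 2 - 1 = 2 * n + 1 by omega]
  field_simp
  ring

theorem cofactor_pos (n : ℕ) {x : ℝ} (hx : 2 < x) :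
    0 < (x - 2) * (x - 1) ^ (2 * n + 1) - 1 + (x - 1) ^ (n + 1) := by
  have h1 : 0 < (x - 2) * (x - 1) ^ (2 * n + 1) :=
    mul_pos (by linarith) (pow_pos (by linarith) _)
  have h2 : 1 < (x - 1) ^ (n + 1) := one_lt_pow₀ (by linarith) (Nat.succ_ne_zero n)
  linarith

theorem f_eq_zero_iff (n : ℕ) {x : ℝ} (hx : 2 < x) :
    f (2 * n + 2) x = 0 ↔ rescaledFactor n x = 0 := by
  have hpow : (x - 1) ^ (n + 1) ≠ 0 := pow_ne_zero _ (by linarith)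
  rw [f_eq_mul n (by linarith), mul_eq_zero, mul_eq_zero, or_iff_left (cofactor_pos n hx).ne',
    or_iff_right hpow]

theorem rescaledFactor_strictMonoOn (n : ℕ) : StrictMonoOn (rescaledFactor n) (Ici 2) := by
  intro x hx y hy hxy
  rw [mem_Ici] at hx hy
  have hx1 : (1 : ℝ) ≤ x - 1 := by linarith
  have hpow : (x - 1) ^ n ≤ (y - 1) ^ n := pow_le_pow_left₀ (by linarith) (by linarith) n
  have hfirst : (x - 2) * (x - 1) ^ n < (y - 2) * (y - 1) ^ n := by
    have : 1 ≤ (x - 1) ^ n := one_le_pow₀ hx1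
    nlinarith
  have hsecond : ((y - 1) ^ (n + 1))⁻¹ ≤ ((x - 1) ^ (n + 1))⁻¹ :=
    inv_anti₀ (by positivity) (pow_le_pow_left₀ (by linarith) (by linarith) _)
  simp only [rescaledFactor]
  linarith

theorem rescaledFactor_continuousOn (n : ℕ) : ContinuousOn (rescaledFactor n) (Ici 2) := by
  refine ContinuousOn.sub (ContinuousOn.sub (by fun_prop) ?_) continuousOn_const
  exact ContinuousOn.inv₀ (by fun_prop) fun x hx =>
    pow_ne_zero _ (by rw [mem_Ici] at hx; linarith)

theorem rescaledFactor_two (n : ℕ) : rescaledFactor n 2 = -2 := by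
  norm_num [rescaledFactor]

theorem rescaledFactor_three_pos {n : ℕ} (hn : 1 ≤ n) : 0 < rescaledFactor n 3 := by
  have h1 : (2 : ℝ) ≤ 2 ^ n := le_self_pow₀ one_le_two (by omega)
  have h2 : ((2 : ℝ) ^ (n + 1))⁻¹ ≤ 2⁻¹ := inv_anti₀ two_pos (le_self_pow₀ one_le_two (by omega))
  norm_num [rescaledFactor]
  linarith

theorem f_three_pos {n : ℕ} (hn : 1 ≤ n) : 0 < f (2 * n + 2) 3 := by
  have ha : (2 : ℝ) ^ 3 ≤ 2 ^ (2 * n + 1) := pow_le_pow_right₀ one_le_two (by omega)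
  have hsplit : (2 : ℝ) ^ (2 * n + 2) = 2 * 2 ^ (2 * n + 1) := by ring
  rw [f, show 2 * n + 2 - 1 = 2 * n + 1 by omega]
  norm_num
  nlinarith

theorem existsUnique_f_eq_zero {n : ℕ} (hn : 1 ≤ n) :
    ∃! x, x ∈ Ioo (2 : ℝ) 3 ∧ f (2 * n + 2) x = 0 := by
  have hIcc : Icc (2 : ℝ) 3 ⊆ Ici 2 := Icc_subset_Ici_self
  rw [existsUnique_congr fun x => and_congr_right fun hx => f_eq_zero_iff n hx.1]
  exact StrictMonoOn.existsUnique_zero_Ioo (by norm_num)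
    ((rescaledFactor_strictMonoOn n).mono hIcc) ((rescaledFactor_continuousOn n).mono hIcc)
    (by rw [rescaledFactor_two]; norm_num) (rescaledFactor_three_pos hn)

end

end RootInUnitInterval

open RootInUnitInterval in
theorem stmt_10 (k : ℕ) (hk : Even k) (hk4 : 4 ≤ k) :
    (0 < ((3 - 2 : ℝ) * (3 - 1) ^ (k - 1) - 1) ^ 2 - (3 - 1 : ℝ) ^ k) ∧
    (∃! x : ℝ, x ∈ Set.Ioo (2 : ℝ) 3 ∧
      ((x - 2) * (x - 1) ^ (k - 1) - 1) ^ 2 - (x - 1) ^ k = 0) := by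
  obtain ⟨n, rfl⟩ : ∃ n, k = 2 * n + 2 := ⟨k / 2 - 1, by obtain ⟨m, rfl⟩ := hk; omega⟩
  have hn : 1 ≤ n := by omega
  exact ⟨f_three_pos hn, existsUnique_f_eq_zero hn⟩
end

section
/- The function g(t) = −ln(t+1)/ln(t) is strictly increasing on the open interval (0,1). -/
open Real Set

theorem StrictMonoOn.div_of_antitoneOn {α K : Type*} [Preorder α] [Semifield K] [LinearOrder K]
    [IsStrictOrderedRing K] {f g : α → K} {s : Set α} (hf : StrictMonoOn f s)
    (hg : AntitoneOn g s) (hf₀ : ∀ x ∈ s, 0 ≤ f x) (hg₀ : ∀ x ∈ s, 0 < g x) :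
    StrictMonoOn (fun x => f x / g x) s :=
  fun _ ha _ hb hab => div_lt_div₀ (hf ha hb hab) (hg ha hb hab.le) (hf₀ _ hb) (hg₀ _ hb)

theorem stmt_11 :
    StrictMonoOn (fun t : ℝ => -Real.log (t + 1) / Real.log t) (Set.Ioo 0 1) := by
  have log_succ_strictMonoOn : StrictMonoOn (fun t : ℝ => log (t + 1)) (Ioo 0 1) :=
    fun a ha b hb hab => log_lt_log (by linarith [ha.1]) (by linarith)
  have neg_log_antitoneOn : AntitoneOn (fun t : ℝ => -log t) (Ioo 0 1) :=
    fun a ha b _ hab => neg_le_neg (log_le_log ha.1 hab)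
  have key : StrictMonoOn (fun t : ℝ => log (t + 1) / -log t) (Ioo 0 1) :=
    log_succ_strictMonoOn.div_of_antitoneOn neg_log_antitoneOn
      (fun t ht => log_nonneg (by linarith [ht.1]))
      (fun t ht => neg_pos.2 (log_neg ht.1 ht.2))
  simpa only [neg_div, div_neg] using key
end

section
/- The function g(t) = (ln(1−2t) − 2 ln(1−t))/ln(t) is strictly increasing on the open interval (0, 1/2). -/
/-!
Write the numerator as `log ((1 - 2t) / (1 - t)²)`. The identity
`(1 - 2s)(1 - t)² - (1 - 2t)(1 - s)² = (t - s)(t(1 - s) + s(1 - t))`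
shows that `(1 - 2t) / (1 - t)²` decreases in `t`, and it is below `1`, so the numerator is
negative and strictly decreasing. The denominator `log t` is negative and strictly increasing,
and such a quotient is strictly increasing.
-/

open Set

theorem StrictAntiOn.div_of_nonpos_of_neg {α 𝕜 : Type*} [Preorder α] [Field 𝕜]
    [LinearOrder 𝕜] [IsStrictOrderedRing 𝕜] {f g : α → 𝕜} {s : Set α}
    (hf : StrictAntiOn f s) (hg : MonotoneOn g s) (hf0 : ∀ x ∈ s, f x ≤ 0)
    (hg0 : ∀ x ∈ s, g x < 0) :
    StrictMonoOn (fun x => f x / g x) s := by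
  intro a ha b hb hab
  calc f a / g a = -f a / -g a := (neg_div_neg_eq _ _).symm
    _ ≤ -f a / -g b :=
      div_le_div_of_nonneg_left (neg_nonneg.2 (hf0 a ha)) (neg_pos.2 (hg0 b hb))
        (neg_le_neg (hg ha hb hab.le))
    _ < -f b / -g b := div_lt_div_of_pos_right (neg_lt_neg (hf ha hb hab)) (neg_pos.2 (hg0 b hb))
    _ = f b / g b := neg_div_neg_eq _ _

theorem strictAntiOn_one_sub_two_mul_div_one_sub_sq :
    StrictAntiOn (fun t : ℝ => (1 - 2 * t) / (1 - t) ^ 2) (Ico 0 1) := by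
  intro s ⟨hs0, hs1⟩ t ⟨ht0, ht1⟩ hst
  have hs : 0 < (1 - s) ^ 2 := by nlinarith
  have ht : 0 < (1 - t) ^ 2 := by nlinarith
  rw [div_lt_div_iff₀ ht hs]
  have key : (1 - 2 * s) * (1 - t) ^ 2 - (1 - 2 * t) * (1 - s) ^ 2
      = (t - s) * (t * (1 - s) + s * (1 - t)) := by
    ring
  have hpos : 0 < (t - s) * (t * (1 - s) + s * (1 - t)) :=
    mul_pos (sub_pos.2 hst) (by nlinarith)
  linarith

theorem one_sub_two_mul_div_one_sub_sq_mem_Ioo {t : ℝ} (ht0 : 0 < t) (ht : t < 1 / 2) :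
    (1 - 2 * t) / (1 - t) ^ 2 ∈ Ioo 0 1 := by
  have hsq : 0 < (1 - t) ^ 2 := by nlinarith
  exact ⟨div_pos (by linarith) hsq, (div_lt_one hsq).2 (by nlinarith)⟩

theorem log_one_sub_two_mul_sub_two_mul_log_one_sub {t : ℝ} (ht : t < 1 / 2) :
    Real.log (1 - 2 * t) - 2 * Real.log (1 - t) = Real.log ((1 - 2 * t) / (1 - t) ^ 2) := by
  rw [Real.log_div (by linarith) (by nlinarith), Real.log_pow, Nat.cast_ofNat]

theorem stmt_13 :
    StrictMonoOn (fun t : ℝ => (Real.log (1 - 2 * t) - 2 * Real.log (1 - t)) / Real.log t)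
      (Set.Ioo 0 (1 / 2)) := by
  have hsub : Ioo (0 : ℝ) (1 / 2) ⊆ Ico 0 1 :=
    Ioo_subset_Ico_self.trans (Ico_subset_Ico_right (by norm_num))
  have hnum : StrictAntiOn (fun t : ℝ => Real.log ((1 - 2 * t) / (1 - t) ^ 2)) (Ioo 0 (1 / 2)) :=
    Real.strictMonoOn_log.comp_strictAntiOn
      (strictAntiOn_one_sub_two_mul_div_one_sub_sq.mono hsub)
      fun t ht => (one_sub_two_mul_div_one_sub_sq_mem_Ioo ht.1 ht.2).1
  have hnum_neg : ∀ t ∈ Ioo (0 : ℝ) (1 / 2), Real.log ((1 - 2 * t) / (1 - t) ^ 2) ≤ 0 := by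
    intro t ⟨ht0, ht⟩
    have h := one_sub_two_mul_div_one_sub_sq_mem_Ioo ht0 ht
    exact (Real.log_neg h.1 h.2).le
  have hlog : StrictMonoOn Real.log (Ioo 0 (1 / 2)) := Real.strictMonoOn_log.mono fun t ht => ht.1
  have hlog_neg : ∀ t ∈ Ioo (0 : ℝ) (1 / 2), Real.log t < 0 :=
    fun t ht => Real.log_neg ht.1 (by linarith [ht.2])
  refine (hnum.div_of_nonpos_of_neg hlog.monotoneOn hnum_neg hlog_neg).congr fun t ht => ?_
  simp only [log_one_sub_two_mul_sub_two_mul_log_one_sub ht.2]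
end

section
/- For each odd integer k ≥ 3 let λ_k be the unique real root in (0,1) of (λ−2)(1−λ)^{k−1} + 1 = 0. Then the sequence (λ_k) (indexed over odd k) is strictly decreasing in k and converges to 0 as k → ∞. -/
/-!
Write the defining equation as `(2 - λ) (1 - λ)^m = 1` with `m = k - 1`. For fixed `m` the left side
strictly decreases in `λ ∈ (0, 1)`, and for fixed `λ` it strictly decreases in `m`; hence a larger
`m` forces a smaller root. For the limit, `2 - λ ≤ 2` gives `(1 - λ)^m ≥ 1/2`, while Bernoulli's
inequality gives `(1 + mλ)(1 - λ)^m ≤ (1 - λ²)^m ≤ 1`; together `mλ ≤ 1`.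
-/

lemma root_lt_root_of_lt {m n : ℕ} (hmn : m < n) {a b : ℝ} (hb0 : 0 < b) (hb1 : b < 1)
    (ha : (a - 2) * (1 - a) ^ m + 1 = 0) (hb : (b - 2) * (1 - b) ^ n + 1 = 0) : b < a := by
  by_contra! hab
  have hpow : (1 - b) ^ n < (1 - b) ^ m := pow_lt_pow_right_of_lt_one₀ (by linarith) (by linarith) hmn
  have hmono : (2 - b) * (1 - b) ^ m ≤ (2 - a) * (1 - a) ^ m :=
    mul_le_mul (by linarith) (pow_le_pow_left₀ (by linarith) (by linarith) m) (by positivity)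
      (by linarith)
  nlinarith

lemma mul_root_le_one {m : ℕ} {x : ℝ} (hx0 : 0 ≤ x) (hx1 : x ≤ 1)
    (h : (x - 2) * (1 - x) ^ m + 1 = 0) : m * x ≤ 1 := by
  have hhalf : 1 / 2 ≤ (1 - x) ^ m := by nlinarith [pow_nonneg (sub_nonneg.2 hx1) m]
  have hbernoulli : 1 + m * x ≤ (1 + x) ^ m := one_add_mul_le_pow (by linarith) m
  have hprod : (1 + x) ^ m * (1 - x) ^ m ≤ 1 := by
    rw [← mul_pow]
    exact pow_le_one₀ (by nlinarith) (by nlinarith)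
  nlinarith

theorem stmt_14 (lam : ℕ → ℝ)
    (hroot : ∀ k, Odd k → 3 ≤ k →
      lam k ∈ Set.Ioo (0 : ℝ) 1 ∧ (lam k - 2) * (1 - lam k) ^ (k - 1) + 1 = 0) :
    (∀ k₁ k₂, Odd k₁ → Odd k₂ → 3 ≤ k₁ → k₁ < k₂ → lam k₂ < lam k₁) ∧
    Filter.Tendsto (fun n => lam (2 * n + 3)) Filter.atTop (nhds 0) := by
  refine ⟨fun k₁ k₂ h₁ h₂ hk₁ hlt => ?_, ?_⟩
  · obtain ⟨⟨hpos, hlt1⟩, hroot₂⟩ := hroot k₂ h₂ (hk₁.trans hlt.le)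
    exact root_lt_root_of_lt (by omega) hpos hlt1 (hroot k₁ h₁ hk₁).2 hroot₂
  · have hroot' (n : ℕ) := hroot (2 * n + 3) ⟨n + 1, by ring⟩ (by omega)
    have hupper (n : ℕ) : lam (2 * n + 3) ≤ 1 / (n + 1) := by
      obtain ⟨⟨hpos, hlt1⟩, heq⟩ := hroot' n
      have hmul := mul_root_le_one hpos.le hlt1.le heq
      rw [show 2 * n + 3 - 1 = 2 * n + 2 by omega] at hmul
      push_cast at hmul
      rw [le_div_iff₀ (by positivity)]
      nlinarith
    exact squeeze_zero (fun n => (hroot' n).1.1.le) hupper tendsto_one_div_add_atTop_nhds_zero_nat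
end

section
/- For each odd integer k ≥ 3 let λ_k be the unique real root in (1, 2k/(k+1)) of (λ−2)^2 (1−λ)^{k−1} + 2λ − 3 = 0. Then the sequence (λ_k) (indexed over odd k) is strictly increasing in k and converges to 3/2 as k → ∞. -/
/-!
Since `k - 1` is even, the defining equation says `(λ - 1) ^ (k - 1) = (3 - 2λ) / (2 - λ) ^ 2`.
The left side is positive, so `λ_k < 3/2`, and decreasing in `k`, while the right side is
decreasing in `λ`; hence `λ_k` increases with `k`. Finally `(2 - λ) ^ 2 ≤ 1` and `λ - 1 < 1/2`
give `3 - 2λ_k ≤ 2 ^ (1 - k)`, which squeezes `λ_k` to `3/2`.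
-/

open Filter Set

lemma antitoneOn_three_sub_two_mul_div_sq :
    AntitoneOn (fun x : ℝ => (3 - 2 * x) / (2 - x) ^ 2) (Ico 1 2) := by
  rintro b ⟨hb1, hb2⟩ a ⟨ha1, ha2⟩ hba
  rw [div_le_div_iff₀ (by nlinarith) (by nlinarith)]
  -- with `u = 2 - a`, `v = 2 - b` the difference is `(u - v) * (u * (1 - v) + v * (1 - u))`
  nlinarith [mul_nonneg (sub_nonneg.2 hba) (mul_nonneg (sub_nonneg.2 ha2.le) (sub_nonneg.2 hb1)),
    mul_nonneg (sub_nonneg.2 hba) (mul_nonneg (sub_nonneg.2 hb2.le) (sub_nonneg.2 ha1))]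

lemma two_mul_div_add_one_lt_two {x : ℝ} (hx : 0 ≤ x) : 2 * x / (x + 1) < 2 := by
  rw [div_lt_iff₀ (by positivity)]
  linarith

lemma pow_eq_of_root {k : ℕ} (hk : Odd k) {l : ℝ} (hl : l ≠ 2)
    (h : (l - 2) ^ 2 * (1 - l) ^ (k - 1) + 2 * l - 3 = 0) :
    (l - 1) ^ (k - 1) = (3 - 2 * l) / (2 - l) ^ 2 := by
  have heven : Even (k - 1) := Nat.Odd.sub_odd hk odd_one
  rw [eq_div_iff (pow_ne_zero 2 (sub_ne_zero.2 hl.symm))]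
  rw [show 1 - l = -(l - 1) by ring, heven.neg_pow] at h
  linear_combination h

lemma lt_three_halves_of_pow_eq {m : ℕ} {l : ℝ} (hl : 1 < l)
    (h : (l - 1) ^ m = (3 - 2 * l) / (2 - l) ^ 2) : l < 3 / 2 := by
  have hpos : 0 < (3 - 2 * l) / (2 - l) ^ 2 := h ▸ pow_pos (sub_pos.2 hl) m
  by_contra! hge
  exact hpos.not_ge (div_nonpos_of_nonpos_of_nonneg (by linarith) (sq_nonneg _))

lemma lt_of_pow_eq_of_lt {m n : ℕ} (hmn : m < n) {a b : ℝ}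
    (ha : a ∈ Ioo 1 2) (hb : b ∈ Ioo 1 2)
    (ha_eq : (a - 1) ^ m = (3 - 2 * a) / (2 - a) ^ 2)
    (hb_eq : (b - 1) ^ n = (3 - 2 * b) / (2 - b) ^ 2) : a < b := by
  by_contra! hba
  have := calc
    (b - 1) ^ n < (b - 1) ^ m :=
      pow_lt_pow_right_of_lt_one₀ (by linarith [hb.1]) (by linarith [hb.2]) hmn
    _ ≤ (a - 1) ^ m := pow_le_pow_left₀ (by linarith [hb.1]) (by linarith) m
    _ ≤ (b - 1) ^ n := by
      rw [ha_eq, hb_eq]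
      exact antitoneOn_three_sub_two_mul_div_sq (Ioo_subset_Ico_self hb)
        (Ioo_subset_Ico_self ha) hba
  exact this.false

lemma three_sub_two_mul_le_half_pow {m : ℕ} {l : ℝ} (hl : 1 < l)
    (h : (l - 1) ^ m = (3 - 2 * l) / (2 - l) ^ 2) : 3 - 2 * l ≤ (1 / 2) ^ m := by
  have h32 := lt_three_halves_of_pow_eq hl h
  rw [eq_div_iff (by nlinarith)] at h
  calc 3 - 2 * l = (l - 1) ^ m * (2 - l) ^ 2 := h.symm
    _ ≤ (1 / 2) ^ m * 1 :=
      mul_le_mul (pow_le_pow_left₀ (by linarith) (by linarith) m) (by nlinarith)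
        (sq_nonneg _) (by positivity)
    _ = (1 / 2) ^ m := mul_one _

theorem stmt_16 (lam : ℕ → ℝ)
    (hroot : ∀ k : ℕ, Odd k → 3 ≤ k →
      lam k ∈ Set.Ioo (1 : ℝ) (2 * (k : ℝ) / ((k : ℝ) + 1)) ∧
      (lam k - 2) ^ 2 * (1 - lam k) ^ (k - 1) + 2 * lam k - 3 = 0) :
    (∀ k₁ k₂, Odd k₁ → Odd k₂ → 3 ≤ k₁ → k₁ < k₂ → lam k₁ < lam k₂) ∧
    Filter.Tendsto (fun n => lam (2 * n + 3)) Filter.atTop (nhds (3 / 2)) := by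
  have hroot' : ∀ k, Odd k → 3 ≤ k →
      lam k ∈ Ioo 1 2 ∧ (lam k - 1) ^ (k - 1) = (3 - 2 * lam k) / (2 - lam k) ^ 2 := by
    intro k hk hk3
    obtain ⟨⟨h1, h2⟩, heq⟩ := hroot k hk hk3
    have hlt2 : lam k < 2 := h2.trans (two_mul_div_add_one_lt_two k.cast_nonneg)
    exact ⟨⟨h1, hlt2⟩, pow_eq_of_root hk hlt2.ne heq⟩
  refine ⟨fun k₁ k₂ h₁ h₂ h3 hlt => ?_, ?_⟩
  · obtain ⟨ha, ha_eq⟩ := hroot' k₁ h₁ h3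
    obtain ⟨hb, hb_eq⟩ := hroot' k₂ h₂ (h3.trans hlt.le)
    exact lt_of_pow_eq_of_lt (by omega) ha hb ha_eq hb_eq
  · have hbounds : ∀ n,
        3 / 2 - (1 / 2) ^ n / 2 ≤ lam (2 * n + 3) ∧ lam (2 * n + 3) ≤ 3 / 2 := by
      intro n
      obtain ⟨hl, hl_eq⟩ := hroot' (2 * n + 3) ⟨n + 1, by ring⟩ (by omega)
      have hle := three_sub_two_mul_le_half_pow hl.1 hl_eq
      have hmono : (1 / 2 : ℝ) ^ (2 * n + 3 - 1) ≤ (1 / 2) ^ n :=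
        pow_le_pow_of_le_one (by norm_num) (by norm_num) (by omega)
      exact ⟨by linarith, (lt_three_halves_of_pow_eq hl.1 hl_eq).le⟩
    have hlower : Tendsto (fun n : ℕ => 3 / 2 - (1 / 2 : ℝ) ^ n / 2) atTop (nhds (3 / 2)) := by
      have hpow := tendsto_pow_atTop_nhds_zero_of_lt_one (r := (1 / 2 : ℝ)) (by norm_num)
        (by norm_num)
      simpa using (hpow.div_const 2).const_sub (3 / 2 : ℝ)
    exact tendsto_of_tendsto_of_tendsto_of_le_of_le hlower tendsto_const_nhds
      (fun n => (hbounds n).1) (fun n => (hbounds n).2)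
end

section
/- For every even integer k ≥ 4, the value f(2k/(k+1)) = (2k/(k+1) − 2)^2 (2k/(k+1) − 1)^{k−1} + 3 satisfies f(2k/(k+1)) ≤ 13/4, while g(2k/(k+1)) = 2·(2k/(k+1)) = 4 − 4/(k+1) satisfies g(2k/(k+1)) > f(2k/(k+1)). -/
/-!
Put `λ = 2k/(k+1)`. Then `λ - 2 = -2/(k+1)` and `0 ≤ λ - 1 = (k-1)/(k+1) ≤ 1`, so
`f(λ) ≤ 4/(k+1)² + 3`, while `g(λ) = 4 - 4/(k+1)`. For `k ≥ 4` we have `1/(k+1) ≤ 1/5`, and both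
claims reduce to `4/25 + 3 ≤ 13/4` and `4/25 + 4/5 < 1`.
-/

namespace TwoMulDivAddOne

variable {x : ℝ}

lemma sub_two_eq (hx : x + 1 ≠ 0) : 2 * x / (x + 1) - 2 = -2 / (x + 1) := by
  field_simp; ring

lemma sub_one_eq (hx : x + 1 ≠ 0) : 2 * x / (x + 1) - 1 = (x - 1) / (x + 1) := by
  field_simp; ring

lemma two_mul_eq (hx : x + 1 ≠ 0) : 2 * (2 * x / (x + 1)) = 4 - 4 / (x + 1) := by
  field_simp; ring

lemma sub_one_pow_le_one (hx : 1 ≤ x) (n : ℕ) : (2 * x / (x + 1) - 1) ^ n ≤ 1 := by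
  have hx1 : 0 < x + 1 := by linarith
  rw [sub_one_eq hx1.ne']
  exact pow_le_one₀ (div_nonneg (by linarith) hx1.le) ((div_le_one hx1).2 (by linarith))

lemma sub_two_sq_mul_sub_one_pow_le (hx : 1 ≤ x) (n : ℕ) :
    (2 * x / (x + 1) - 2) ^ 2 * (2 * x / (x + 1) - 1) ^ n ≤ 4 / (x + 1) ^ 2 := by
  have hsq : (2 * x / (x + 1) - 2) ^ 2 = 4 / (x + 1) ^ 2 := by
    rw [sub_two_eq (by linarith), div_pow]; norm_num
  rw [hsq]
  exact mul_le_of_le_one_right (by positivity) (sub_one_pow_le_one hx n)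

end TwoMulDivAddOne

lemma four_div_add_one_sq_add_three_le (x : ℝ) (hx : 4 ≤ x) : 4 / (x + 1) ^ 2 + 3 ≤ 13 / 4 := by
  have : 4 / (x + 1) ^ 2 ≤ 4 / 5 ^ 2 := by gcongr; linarith
  linarith

lemma four_div_add_one_sq_add_three_lt (x : ℝ) (hx : 4 ≤ x) :
    4 / (x + 1) ^ 2 + 3 < 4 - 4 / (x + 1) := by
  have hx1 : 0 < x + 1 := by linarith
  rw [← sub_pos]
  have key : 4 - 4 / (x + 1) - (4 / (x + 1) ^ 2 + 3) =
      ((x + 1) ^ 2 - 4 * (x + 1) - 4) / (x + 1) ^ 2 := by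
    field_simp; ring
  rw [key]
  exact div_pos (by nlinarith) (by positivity)

open TwoMulDivAddOne in
theorem stmt_19_general (k : ℕ) (hk4 : 4 ≤ k) :
    ((2 * (k : ℝ) / (k + 1) - 2) ^ 2 * (2 * (k : ℝ) / (k + 1) - 1) ^ (k - 1) + 3 ≤ 13 / 4) ∧
    (2 * (2 * (k : ℝ) / (k + 1)) = 4 - 4 / ((k : ℝ) + 1)) ∧
    ((2 * (k : ℝ) / (k + 1) - 2) ^ 2 * (2 * (k : ℝ) / (k + 1) - 1) ^ (k - 1) + 3 <
      2 * (2 * (k : ℝ) / (k + 1))) := by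
  have hk : (4 : ℝ) ≤ k := by exact_mod_cast hk4
  have hf := sub_two_sq_mul_sub_one_pow_le (x := (k : ℝ)) (by linarith) (k - 1)
  have hg := two_mul_eq (x := (k : ℝ)) (by positivity)
  refine ⟨by linarith [four_div_add_one_sq_add_three_le _ hk], hg, ?_⟩
  rw [hg]
  linarith [four_div_add_one_sq_add_three_lt _ hk]

theorem stmt_19 (k : ℕ) (hk : Even k) (hk4 : 4 ≤ k) :
    ((2 * (k : ℝ) / (k + 1) - 2) ^ 2 * (2 * (k : ℝ) / (k + 1) - 1) ^ (k - 1) + 3 ≤ 13 / 4) ∧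
    (2 * (2 * (k : ℝ) / (k + 1)) = 4 - 4 / ((k : ℝ) + 1)) ∧
    ((2 * (k : ℝ) / (k + 1) - 2) ^ 2 * (2 * (k : ℝ) / (k + 1) - 1) ^ (k - 1) + 3 <
      2 * (2 * (k : ℝ) / (k + 1))) :=
  stmt_19_general k hk4
end
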